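/- Let β > 0, let p, q be positive integers, let Z, M, Λ₁, S be real p×q matrices with every entry of M equal to 0 or 1, and let J be the all-ones p×q matrix. Then the function F(Ẑ) = (1/2)‖M ⊙ (Z − Ẑ)‖_F² + ⟨Λ₁, Ẑ − S⟩_F + (β/2)‖Ẑ − S‖_F² has a unique global minimizer over the real p×q matrices, namely the matrix Ẑ* = (M ⊙ Z − Λ₁ + β S) ⊘ (M + β J), i.e. the matrix whose (j,k) entry is (M_{jk} Z_{jk} − (Λ₁)_{jk} + β S_{jk})/(M_{jk} + β); here every entry of M + βJ is positive so the entrywise division is well defined. -/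
import Mathlib


open Matrix

/-- Frobenius norm of a real matrix. -/
noncomputable def frobNorm {p q : ℕ} (A : Matrix (Fin p) (Fin q) ℝ) : ℝ :=
  Real.sqrt (∑ j, ∑ k, (A j k) ^ 2)

/-- Frobenius inner product of two real matrices. -/
def frobInner {p q : ℕ} (A B : Matrix (Fin p) (Fin q) ℝ) : ℝ :=
  ∑ j, ∑ k, A j k * B j k

/-- Entrywise (Hadamard) division of two real matrices. -/
noncomputable def hdiv {p q : ℕ} (A B : Matrix (Fin p) (Fin q) ℝ) : Matrix (Fin p) (Fin q) ℝ :=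
  Matrix.of fun j k => A j k / B j k

lemma frobNorm_sq {p q : ℕ} (A : Matrix (Fin p) (Fin q) ℝ) :
    (frobNorm A) ^ 2 = ∑ j, ∑ k, (A j k) ^ 2 := by
  apply Real.sq_sqrt
  exact Finset.sum_nonneg fun j _ => Finset.sum_nonneg fun k _ => sq_nonneg _

lemma pointwise_decomp (β m z l s x : ℝ) (hβ : 0 < β) (hm : m = 0 ∨ m = 1) :
    (1/2) * (m * (z - x))^2 + l * (x - s) + (β/2) * (x - s)^2
      = (1/2) * (m * (z - (m*z - l + β*s)/(m+β)))^2
        + l * ((m*z - l + β*s)/(m+β) - s)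
        + (β/2) * ((m*z - l + β*s)/(m+β) - s)^2
        + ((m+β)/2) * (x - (m*z - l + β*s)/(m+β))^2 := by
  have hmb : m + β ≠ 0 := by rcases hm with h | h <;> subst h <;> nlinarith
  rcases hm with h | h <;> subst h <;> field_simp <;> ring

theorem stmt4 (β : ℝ) (hβ : 0 < β) (p q : ℕ) (hp : 0 < p) (hq : 0 < q)
    (Z M Λ₁ S : Matrix (Fin p) (Fin q) ℝ)
    (hM : ∀ j k, M j k = 0 ∨ M j k = 1)
    (J : Matrix (Fin p) (Fin q) ℝ) (hJ : ∀ j k, J j k = 1) :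
    let F : Matrix (Fin p) (Fin q) ℝ → ℝ := fun Zhat =>
      (1 / 2) * (frobNorm (M ⊙ (Z - Zhat))) ^ 2 + frobInner Λ₁ (Zhat - S)
        + (β / 2) * (frobNorm (Zhat - S)) ^ 2
    let Zstar : Matrix (Fin p) (Fin q) ℝ := hdiv (M ⊙ Z - Λ₁ + β • S) (M + β • J)
    (∀ j k, 0 < (M + β • J) j k) ∧
    (∀ j k, Zstar j k = (M j k * Z j k - Λ₁ j k + β * S j k) / (M j k + β)) ∧
    (∀ Zhat, F Zstar ≤ F Zhat) ∧
    (∀ Zhat, (∀ Y, F Zhat ≤ F Y) → Zhat = Zstar) := by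
  intro F Zstar
  have hMpos : ∀ j k, (0:ℝ) < M j k + β := by
    intro j k; rcases hM j k with h | h <;> rw [h] <;> linarith
  have hZstar : ∀ j k, Zstar j k = (M j k * Z j k - Λ₁ j k + β * S j k) / (M j k + β) := by
    intro j k
    simp [Zstar, hdiv, hadamard, hJ, Matrix.add_apply, Matrix.smul_apply, smul_eq_mul]
  have hF : ∀ (A : Matrix (Fin p) (Fin q) ℝ),
      F A = ∑ j, ∑ k, ((1/2) * (M j k * (Z j k - A j k))^2
        + Λ₁ j k * (A j k - S j k) + (β/2) * (A j k - S j k)^2) := by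
    intro A
    simp only [F, frobNorm_sq, frobInner, Finset.mul_sum, hadamard, Matrix.sub_apply,
      Matrix.of_apply, ← Finset.sum_add_distrib]
  clear_value Zstar
  clear_value F
  have key : ∀ (A : Matrix (Fin p) (Fin q) ℝ),
      F A = F Zstar + ∑ j, ∑ k, ((M j k + β)/2) * (A j k - Zstar j k)^2 := by
    intro A
    rw [hF A, hF Zstar, ← Finset.sum_add_distrib]
    refine Finset.sum_congr rfl fun j _ => ?_
    rw [← Finset.sum_add_distrib]
    refine Finset.sum_congr rfl fun k _ => ?_
    rw [hZstar j k]
    exact pointwise_decomp β (M j k) (Z j k) (Λ₁ j k) (S j k) (A j k) hβ (hM j k)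
  have hnn : ∀ (A : Matrix (Fin p) (Fin q) ℝ) (j : Fin p) (k : Fin q),
      (0:ℝ) ≤ ((M j k + β)/2) * (A j k - Zstar j k)^2 := by
    intro A j k
    exact mul_nonneg (by linarith [hMpos j k]) (sq_nonneg _)
  refine ⟨?_, hZstar, ?_, ?_⟩
  · intro j k
    rw [Matrix.add_apply, Matrix.smul_apply, hJ, smul_eq_mul, mul_one]
    exact hMpos j k
  · intro Zhat
    rw [key Zhat]
    have : (0:ℝ) ≤ ∑ j, ∑ k, ((M j k + β)/2) * (Zhat j k - Zstar j k)^2 :=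
      Finset.sum_nonneg fun j _ => Finset.sum_nonneg fun k _ => hnn Zhat j k
    linarith
  · intro Zhat hmin
    have h1 : F Zhat ≤ F Zstar := hmin Zstar
    have h2 : ∑ j, ∑ k, ((M j k + β)/2) * (Zhat j k - Zstar j k)^2 = 0 := by
      have hk := key Zhat
      have hnn' : (0:ℝ) ≤ ∑ j, ∑ k, ((M j k + β)/2) * (Zhat j k - Zstar j k)^2 :=
        Finset.sum_nonneg fun j _ => Finset.sum_nonneg fun k _ => hnn Zhat j k
      linarith
    have hzero : ∀ j ∈ Finset.univ, ∀ k ∈ Finset.univ,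
        ((M j k + β)/2) * (Zhat j k - Zstar j k)^2 = 0 := by
      have h' := (Finset.sum_eq_zero_iff_of_nonneg
        (fun j _ => Finset.sum_nonneg fun k _ => hnn Zhat j k)).mp h2
      intro j hj k hk
      exact (Finset.sum_eq_zero_iff_of_nonneg (fun k _ => hnn Zhat j k)).mp (h' j hj) k hk
    ext j k
    have h := hzero j (Finset.mem_univ j) k (Finset.mem_univ k)
    have hne : (M j k + β)/2 ≠ 0 := by have := hMpos j k; positivity
    have : (Zhat j k - Zstar j k)^2 = 0 := by
      rcases mul_eq_zero.mp h with h | h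
      · exact absurd h hne
      · exact h
    have := pow_eq_zero_iff (n := 2) (by norm_num) |>.mp this
    linarith
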